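/- (Gaussian contraction inequality) Let T ⊆ ℝ^m be a bounded nonempty set, γ_1,...,γ_m i.i.d. standard Gaussian random variables, and Φ_i : ℝ → ℝ be ℓ-Lipschitz functions for each i. Then E sup_{t ∈ T} Σ_{i=1}^m γ_i Φ_i(t_i) ≤ ℓ · E sup_{t ∈ T} Σ_{i=1}^m γ_i t_i. -/
import Mathlib


open MeasureTheory ProbabilityTheory
open scoped ProbabilityTheory ENNReal NNReal BigOperators

/-- The standard Gaussian product measure on `Fin m → ℝ`. -/
noncomputable def gaussianPi (m : ℕ) : Measure (Fin m → ℝ) :=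
  Measure.pi fun _ => gaussianReal 0 1

set_option linter.unusedSectionVars false

section Aux

lemma abs_ciSup_le {ι : Type*} [Nonempty ι] {f : ι → ℝ} {M : ℝ}
    (h : ∀ i, |f i| ≤ M) : |⨆ i, f i| ≤ M := by
  have hba : BddAbove (Set.range f) := ⟨M, by rintro _ ⟨i, rfl⟩; exact (abs_le.1 (h i)).2⟩
  rw [abs_le]
  constructor
  · have h1 := le_ciSup hba (Classical.arbitrary ι)
    have h2 := (abs_le.1 (h (Classical.arbitrary ι))).1
    linarith
  · exact ciSup_le fun i => (abs_le.1 (h i)).2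

lemma lipschitzWith_ciSup {α : Type*} [PseudoMetricSpace α] {ι : Type*} [Nonempty ι]
    {K : ℝ≥0} {f : ι → α → ℝ} (hl : ∀ i, LipschitzWith K (f i))
    (hb : ∀ x, BddAbove (Set.range fun i => f i x)) :
    LipschitzWith K (fun x => ⨆ i, f i x) := by
  refine LipschitzWith.of_dist_le_mul fun x y => ?_
  rw [Real.dist_eq, abs_sub_le_iff]
  have key : ∀ x y : α, (⨆ i, f i x) - (⨆ i, f i y) ≤ (K : ℝ) * dist x y := by
    intro x y
    rw [sub_le_iff_le_add]
    refine ciSup_le fun i => ?_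
    have h1 := (hl i).dist_le_mul x y
    rw [Real.dist_eq, abs_le] at h1
    have h2 := le_ciSup (hb y) i
    linarith [h1.2]
  exact ⟨key x y, by simpa [dist_comm] using key y x⟩

lemma integrable_gaussian_abs : Integrable (fun x : ℝ => |x|) (gaussianReal 0 1) := by
  rw [gaussianReal_of_var_ne_zero 0 one_ne_zero,
    integrable_withDensity_iff (measurable_gaussianPDF 0 1)
      (ae_of_all _ fun x => ENNReal.ofReal_lt_top)]
  have h := (integrable_rpow_mul_exp_neg_mul_sq (b := (2:ℝ)⁻¹) (by norm_num)
    (s := 1) (by norm_num)).const_mul (Real.sqrt (2 * Real.pi))⁻¹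
  refine h.abs.congr (ae_of_all _ fun x => ?_)
  simp only [gaussianPDF_def, ENNReal.toReal_ofReal (gaussianPDFReal_nonneg _ _ _),
    gaussianPDFReal, Real.rpow_one, abs_mul, abs_of_nonneg (Real.exp_nonneg _),
    abs_of_nonneg (inv_nonneg.mpr (Real.sqrt_nonneg _))]
  push_cast
  ring_nf
  rw [ENNReal.toReal_ofReal (by positivity)]
  ring

lemma gaussian_map_neg : (gaussianReal 0 1).map (fun x : ℝ => -x) = gaussianReal 0 1 := by
  have h := gaussianReal_map_const_mul (μ := 0) (v := 1) (-1)
  have h2 : (fun x : ℝ => -x) = ((-1 : ℝ) * ·) := by funext x; ring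
  rw [h2, h]
  congr 1
  · norm_num
  · ext
    norm_num

end Aux

section Key1

variable {ι : Type*} [Nonempty ι]

lemma bddAbove_linear (a b : ι → ℝ) {A Kb : ℝ} (ha : ∀ i, |a i| ≤ A) (hb : ∀ i, |b i| ≤ Kb)
    (γ : ℝ) : BddAbove (Set.range fun i => a i + γ * b i) := by
  refine ⟨A + |γ| * Kb, ?_⟩
  rintro _ ⟨i, rfl⟩
  have h1 := (abs_le.1 (ha i)).2
  have h2 : γ * b i ≤ |γ| * Kb := by
    calc γ * b i ≤ |γ * b i| := le_abs_self _
    _ = |γ| * |b i| := abs_mul _ _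
    _ ≤ |γ| * Kb := mul_le_mul_of_nonneg_left (hb i) (abs_nonneg γ)
  exact add_le_add h1 h2

lemma lipschitz_supLinear (a b : ι → ℝ) {A Kb : ℝ} (ha : ∀ i, |a i| ≤ A)
    (hb : ∀ i, |b i| ≤ Kb) :
    LipschitzWith Kb.toNNReal (fun γ : ℝ => ⨆ i, (a i + γ * b i)) := by
  refine lipschitzWith_ciSup (fun i => ?_) (bddAbove_linear a b ha hb)
  refine LipschitzWith.of_dist_le_mul fun x y => ?_
  rw [Real.dist_eq, Real.dist_eq]
  have : a i + x * b i - (a i + y * b i) = b i * (x - y) := by ring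
  rw [this, abs_mul]
  have hco : (Kb.toNNReal : ℝ) = max Kb 0 := by
    simp [Real.coe_toNNReal']
  rw [hco]
  refine mul_le_mul_of_nonneg_right ?_ (abs_nonneg _)
  exact le_max_of_le_left (hb i)

lemma integrable_supLinear (a b : ι → ℝ) {A Kb : ℝ} (ha : ∀ i, |a i| ≤ A)
    (hb : ∀ i, |b i| ≤ Kb) :
    Integrable (fun γ : ℝ => ⨆ i, (a i + γ * b i)) (gaussianReal 0 1) := by
  have hKb : ∀ i, |b i| ≤ max Kb 0 := fun i => le_max_of_le_left (hb i)
  refine Integrable.mono' ((integrable_const A).add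
    (integrable_gaussian_abs.mul_const (max Kb 0)))
    ((lipschitz_supLinear a b ha hb).continuous.aestronglyMeasurable)
    (ae_of_all _ fun γ => ?_)
  rw [Real.norm_eq_abs]
  refine abs_ciSup_le fun i => ?_
  calc |a i + γ * b i| ≤ |a i| + |γ * b i| := abs_add_le _ _
  _ ≤ A + |γ| * (max Kb 0) := by
      rw [abs_mul]
      exact add_le_add (ha i) (mul_le_mul_of_nonneg_left (hKb i) (abs_nonneg γ))

lemma key1 (a b c : ι → ℝ) {A Kb Kc : ℝ}
    (ha : ∀ i, |a i| ≤ A) (hb : ∀ i, |b i| ≤ Kb) (hc : ∀ i, |c i| ≤ Kc)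
    (hbc : ∀ s t, |b s - b t| ≤ |c s - c t|) :
    ∫ γ, ⨆ i, (a i + γ * b i) ∂(gaussianReal 0 1)
      ≤ ∫ γ, ⨆ i, (a i + γ * c i) ∂(gaussianReal 0 1) := by
  set ν := gaussianReal 0 1 with hν
  set B := fun γ : ℝ => ⨆ i, (a i + γ * b i) with hB
  set C := fun γ : ℝ => ⨆ i, (a i + γ * c i) with hC
  have hnegb : ∀ i, |-b i| ≤ Kb := fun i => by rw [abs_neg]; exact hb i
  have hnegc : ∀ i, |-c i| ≤ Kc := fun i => by rw [abs_neg]; exact hc i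
  have hBneg_eq : (fun γ => B (-γ)) = fun γ : ℝ => ⨆ i, (a i + γ * (-b i)) := by
    funext γ; simp only [hB]; congr 1; funext i; ring
  have hCneg_eq : (fun γ => C (-γ)) = fun γ : ℝ => ⨆ i, (a i + γ * (-c i)) := by
    funext γ; simp only [hC]; congr 1; funext i; ring
  have hBint : Integrable B ν := integrable_supLinear a b ha hb
  have hCint : Integrable C ν := integrable_supLinear a c ha hc
  have hBnint : Integrable (fun γ => B (-γ)) ν := by
    rw [hBneg_eq]; exact integrable_supLinear a _ ha hnegb
  have hCnint : Integrable (fun γ => C (-γ)) ν := by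
    rw [hCneg_eq]; exact integrable_supLinear a _ ha hnegc
  have hBm : AEStronglyMeasurable B ν :=
    (lipschitz_supLinear a b ha hb).continuous.aestronglyMeasurable
  have hCm : AEStronglyMeasurable C ν :=
    (lipschitz_supLinear a c ha hc).continuous.aestronglyMeasurable
  have hintB : ∫ γ, B γ ∂ν = ∫ γ, B (-γ) ∂ν := by
    conv_lhs => rw [hν, ← gaussian_map_neg]
    rw [integral_map measurable_neg.aemeasurable (by rw [gaussian_map_neg, ← hν]; exact hBm)]
  have hintC : ∫ γ, C γ ∂ν = ∫ γ, C (-γ) ∂ν := by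
    conv_lhs => rw [hν, ← gaussian_map_neg]
    rw [integral_map measurable_neg.aemeasurable (by rw [gaussian_map_neg, ← hν]; exact hCm)]
  have rb : ∀ γ, BddAbove (Set.range fun i => a i + γ * b i) := bddAbove_linear a b ha hb
  have rc : ∀ γ, BddAbove (Set.range fun i => a i + γ * c i) := bddAbove_linear a c ha hc
  have hpt : ∀ γ, B γ + B (-γ) ≤ C γ + C (-γ) := by
    intro γ
    have pair : ∀ s t : ι, (a s + γ * b s) + (a t + -(γ * b t)) ≤ C γ + C (-γ) := by
      intro s t
      have h1 : γ * b s - γ * b t ≤ |γ * c s - γ * c t| := by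
        calc γ * b s - γ * b t = γ * (b s - b t) := by ring
        _ ≤ |γ * (b s - b t)| := le_abs_self _
        _ = |γ| * |b s - b t| := abs_mul _ _
        _ ≤ |γ| * |c s - c t| := mul_le_mul_of_nonneg_left (hbc s t) (abs_nonneg γ)
        _ = |γ * (c s - c t)| := (abs_mul _ _).symm
        _ = |γ * c s - γ * c t| := by rw [mul_sub]
      have e1 : a s + γ * c s ≤ C γ := le_ciSup (rc γ) s
      have e2 : a t + (-γ) * c t ≤ C (-γ) := le_ciSup (rc (-γ)) t
      have e3 : a t + γ * c t ≤ C γ := le_ciSup (rc γ) t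
      have e4 : a s + (-γ) * c s ≤ C (-γ) := le_ciSup (rc (-γ)) s
      rw [neg_mul] at e2 e4
      rcases le_abs.mp h1 with h | h
      · linarith
      · linarith
    have step1 : ∀ s : ι, (a s + γ * b s) + B (-γ) ≤ C γ + C (-γ) := by
      intro s
      have h : B (-γ) ≤ (C γ + C (-γ)) - (a s + γ * b s) := by
        refine ciSup_le fun t => ?_
        have := pair s t
        have hneg : a t + (-γ) * b t = a t + -(γ * b t) := by ring
        linarith [hneg ▸ this]
      linarith
    have h2 : B γ ≤ (C γ + C (-γ)) - B (-γ) :=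
      ciSup_le fun s => by have := step1 s; linarith
    linarith
  have h2 : ∫ γ, (B γ + B (-γ)) ∂ν ≤ ∫ γ, (C γ + C (-γ)) ∂ν :=
    integral_mono (hBint.add hBnint) (hCint.add hCnint) hpt
  rw [integral_add hBint hBnint, integral_add hCint hCnint, ← hintB, ← hintC] at h2
  linarith

end Key1

section Pi

lemma measurePreserving_eval' {ι : Type*} [Fintype ι] {α : ι → Type*}
    [∀ i, MeasurableSpace (α i)] (μ : ∀ i, Measure (α i)) [∀ i, IsProbabilityMeasure (μ i)]
    (i : ι) : MeasurePreserving (Function.eval i) (Measure.pi μ) (μ i) := by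
  classical
  refine ⟨measurable_pi_apply i, ?_⟩
  ext s hs
  rw [Measure.map_apply (measurable_pi_apply i) hs]
  have hpre : Function.eval i ⁻¹' s =
      Set.pi Set.univ (Function.update (fun j => (Set.univ : Set (α j))) i s) := by
    ext g
    simp only [Set.mem_preimage, Set.mem_pi, Set.mem_univ, forall_true_left]
    constructor
    · intro h j
      rcases eq_or_ne j i with rfl | hj
      · simpa using h
      · simp [Function.update_of_ne hj]
    · intro h
      have := h i
      simpa using this
  rw [hpre, Measure.pi_pi, Finset.prod_eq_single i]
  · simp
  · intro j _ hj
    simp [Function.update_of_ne hj]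
  · intro h
    exact absurd (Finset.mem_univ i) h

lemma integrable_abs_eval (m : ℕ) (i : Fin m) :
    Integrable (fun g : Fin m → ℝ => |g i|) (gaussianPi m) := by
  have hmp : MeasurePreserving (Function.eval i) (gaussianPi m) (gaussianReal 0 1) :=
    measurePreserving_eval' _ i
  have h0 : Integrable (fun x : ℝ => |x|) ((gaussianPi m).map (Function.eval i)) := by
    rw [hmp.map_eq]; exact integrable_gaussian_abs
  exact h0.comp_measurable (measurable_pi_apply i)

noncomputable def splitAt {m : ℕ} (k : Fin m) :
    (Fin m → ℝ) ≃ᵐ ℝ × ({i : Fin m // i ≠ k} → ℝ) where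
  toEquiv :=
  { toFun := fun g => (g k, fun j => g j.1)
    invFun := fun z i => if h : i = k then z.1 else z.2 ⟨i, h⟩
    left_inv := fun g => by
      funext i
      rcases eq_or_ne i k with rfl | h
      · exact dif_pos rfl
      · exact dif_neg h
    right_inv := fun z => by
      refine Prod.ext ?_ ?_
      · exact dif_pos rfl
      · funext j
        exact dif_neg j.2 }
  measurable_toFun := (measurable_pi_apply k).prodMk
    (measurable_pi_lambda _ fun j => measurable_pi_apply _)
  measurable_invFun := by
    refine measurable_pi_lambda _ fun i => ?_
    show Measurable fun z : ℝ × ({j : Fin m // j ≠ k} → ℝ) =>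
      if h : i = k then z.1 else z.2 ⟨i, h⟩
    rcases eq_or_ne i k with rfl | h
    · have h2 : (fun z : ℝ × ({j : Fin m // j ≠ i} → ℝ) =>
          (if h : i = i then z.1 else z.2 ⟨i, h⟩)) = fun z => z.1 :=
        funext fun z => dif_pos rfl
      rw [h2]
      exact measurable_fst
    · have h2 : (fun z : ℝ × ({j : Fin m // j ≠ k} → ℝ) =>
          (if h' : i = k then z.1 else z.2 ⟨i, h'⟩)) = fun z => z.2 ⟨i, h⟩ :=
        funext fun z => dif_neg h
      rw [h2]
      exact (measurable_pi_apply (⟨i, h⟩ : {i : Fin m // i ≠ k})).comp measurable_snd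

lemma splitAt_symm_apply {m : ℕ} (k : Fin m) (x : ℝ) (y : {i : Fin m // i ≠ k} → ℝ)
    (i : Fin m) : (splitAt k).symm (x, y) i = if h : i = k then x else y ⟨i, h⟩ := rfl

lemma measurePreserving_splitAt {m : ℕ} (k : Fin m) :
    MeasurePreserving (splitAt k) (gaussianPi m)
      ((gaussianReal 0 1).prod
        (Measure.pi fun _ : {i : Fin m // i ≠ k} => gaussianReal 0 1)) := by
  classical
  have h1 := measurePreserving_piEquivPiSubtypeProd
    (fun _ : Fin m => gaussianReal 0 1) (fun i => i = k)
  have h2 : MeasurePreserving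
      (Prod.map (⇑(MeasurableEquiv.piUnique (fun _ : {i : Fin m // i = k} => ℝ))) id)
      ((Measure.pi fun _ : {i : Fin m // i = k} => gaussianReal 0 1).prod
        (Measure.pi fun _ : {i : Fin m // ¬ i = k} => gaussianReal 0 1))
      ((gaussianReal 0 1).prod
        (Measure.pi fun _ : {i : Fin m // ¬ i = k} => gaussianReal 0 1)) :=
    (measurePreserving_piUnique
      (fun _ : {i : Fin m // i = k} => gaussianReal 0 1)).prod
      (MeasurePreserving.id _)
  have hfin : Subtype.fintype (fun i : Fin m => i = k) = Fintype.subtypeEq k :=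
    Subsingleton.elim _ _
  rw [hfin] at h1
  have h3 := h2.comp h1
  have hco : ⇑(splitAt k) =
      (Prod.map (⇑(MeasurableEquiv.piUnique (fun _ : {i : Fin m // i = k} => ℝ))) id) ∘
        ⇑(MeasurableEquiv.piEquivPiSubtypeProd (fun _ : Fin m => ℝ) (fun i => i = k)) := rfl
  rw [show ⇑(splitAt k) =
      (Prod.map (⇑(MeasurableEquiv.piUnique (fun _ : {i : Fin m // i = k} => ℝ))) id) ∘
        ⇑(MeasurableEquiv.piEquivPiSubtypeProd (fun _ : Fin m => ℝ) (fun i => i = k)) from hco]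
  exact h3

end Pi

section FLemmas

variable {m : ℕ} {T : Set (Fin m → ℝ)} [Nonempty T]

lemma bddAbove_F {c : Fin m → ℝ → ℝ} {C : Fin m → ℝ}
    (hb : ∀ i, ∀ t ∈ T, |c i (t i)| ≤ C i) (g : Fin m → ℝ) :
    BddAbove (Set.range fun t : T => ∑ i, g i * c i (t.1 i)) := by
  refine ⟨∑ i, |g i| * C i, ?_⟩
  rintro _ ⟨t, rfl⟩
  refine Finset.sum_le_sum fun i _ => ?_
  calc g i * c i (t.1 i) ≤ |g i * c i (t.1 i)| := le_abs_self _
  _ = |g i| * |c i (t.1 i)| := abs_mul _ _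
  _ ≤ |g i| * C i := mul_le_mul_of_nonneg_left (hb i t.1 t.2) (abs_nonneg _)

lemma lipschitz_F {c : Fin m → ℝ → ℝ} {C : Fin m → ℝ} (hC : ∀ i, 0 ≤ C i)
    (hb : ∀ i, ∀ t ∈ T, |c i (t i)| ≤ C i) :
    LipschitzWith (∑ i, C i).toNNReal
      (fun g : Fin m → ℝ => ⨆ t : T, ∑ i, g i * c i (t.1 i)) := by
  refine lipschitzWith_ciSup (fun t => ?_) (fun g => bddAbove_F hb g)
  refine LipschitzWith.of_dist_le_mul fun g g' => ?_
  have hco : (((∑ i, C i).toNNReal : ℝ≥0) : ℝ) = ∑ i, C i :=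
    Real.coe_toNNReal _ (Finset.sum_nonneg fun i _ => hC i)
  rw [Real.dist_eq, hco, ← Finset.sum_sub_distrib]
  calc |∑ i, (g i * c i (t.1 i) - g' i * c i (t.1 i))|
      ≤ ∑ i, |g i * c i (t.1 i) - g' i * c i (t.1 i)| := Finset.abs_sum_le_sum_abs _ _
  _ ≤ ∑ i, C i * dist g g' := by
      refine Finset.sum_le_sum fun i _ => ?_
      have h1 : g i * c i (t.1 i) - g' i * c i (t.1 i) = (g i - g' i) * c i (t.1 i) := by ring
      rw [h1, abs_mul]
      have h2 : |g i - g' i| ≤ dist g g' := by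
        rw [← Real.dist_eq]
        exact dist_le_pi_dist g g' i
      calc |g i - g' i| * |c i (t.1 i)| ≤ dist g g' * C i :=
            mul_le_mul h2 (hb i t.1 t.2) (abs_nonneg _) dist_nonneg
      _ = C i * dist g g' := mul_comm _ _
  _ = (∑ i, C i) * dist g g' := by rw [Finset.sum_mul]

lemma abs_F_le {c : Fin m → ℝ → ℝ} {C : Fin m → ℝ}
    (hb : ∀ i, ∀ t ∈ T, |c i (t i)| ≤ C i) (g : Fin m → ℝ) :
    |⨆ t : T, ∑ i, g i * c i (t.1 i)| ≤ ∑ i, C i * |g i| := by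
  refine abs_ciSup_le fun t => ?_
  calc |∑ i, g i * c i (t.1 i)| ≤ ∑ i, |g i * c i (t.1 i)| := Finset.abs_sum_le_sum_abs _ _
  _ ≤ ∑ i, C i * |g i| := by
      refine Finset.sum_le_sum fun i _ => ?_
      rw [abs_mul, mul_comm]
      exact mul_le_mul_of_nonneg_right (hb i t.1 t.2) (abs_nonneg _)

lemma integrable_F {c : Fin m → ℝ → ℝ} {C : Fin m → ℝ} (hC : ∀ i, 0 ≤ C i)
    (hb : ∀ i, ∀ t ∈ T, |c i (t i)| ≤ C i) :
    Integrable (fun g : Fin m → ℝ => ⨆ t : T, ∑ i, g i * c i (t.1 i)) (gaussianPi m) := by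
  refine Integrable.mono' (g := fun g => ∑ i, C i * |g i|)
    (integrable_finset_sum _ fun i _ => (integrable_abs_eval m i).const_mul (C i))
    ((lipschitz_F hC hb).continuous.aestronglyMeasurable)
    (ae_of_all _ fun g => ?_)
  rw [Real.norm_eq_abs]
  exact abs_F_le hb g

end FLemmas

lemma step_lemma (m : ℕ) (T : Set (Fin m → ℝ)) (hT : T.Nonempty)
    (C : Fin m → ℝ) (hC : ∀ i, 0 ≤ C i)
    (c₁ c₂ : Fin m → ℝ → ℝ) (k : Fin m)
    (hne : ∀ i, i ≠ k → c₁ i = c₂ i)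
    (hb1 : ∀ i, ∀ t ∈ T, |c₁ i (t i)| ≤ C i)
    (hb2 : ∀ i, ∀ t ∈ T, |c₂ i (t i)| ≤ C i)
    (hk : ∀ s ∈ T, ∀ t ∈ T, |c₁ k (s k) - c₁ k (t k)| ≤ |c₂ k (s k) - c₂ k (t k)|) :
    ∫ g, ⨆ t : T, ∑ i, g i * c₁ i (t.1 i) ∂(gaussianPi m)
      ≤ ∫ g, ⨆ t : T, ∑ i, g i * c₂ i (t.1 i) ∂(gaussianPi m) := by
  classical
  haveI : Nonempty T := hT.to_subtype
  set ν : Measure ℝ := gaussianReal 0 1 with hν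
  set π₂ : Measure ({i : Fin m // i ≠ k} → ℝ) := Measure.pi (fun _ => gaussianReal 0 1) with hπ₂
  set e := splitAt k with he
  have hmp := measurePreserving_splitAt k
  set F₁ := fun g : Fin m → ℝ => ⨆ t : T, ∑ i, g i * c₁ i (t.1 i) with hF₁
  set F₂ := fun g : Fin m → ℝ => ⨆ t : T, ∑ i, g i * c₂ i (t.1 i) with hF₂
  have hF₁int : Integrable F₁ (gaussianPi m) := integrable_F hC hb1
  have hF₂int : Integrable F₂ (gaussianPi m) := integrable_F hC hb2
  have hG₁int : Integrable (F₁ ∘ ⇑e.symm) (ν.prod π₂) :=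
    ((hmp.symm e).integrable_comp_emb e.symm.measurableEmbedding).mpr hF₁int
  have hG₂int : Integrable (F₂ ∘ ⇑e.symm) (ν.prod π₂) :=
    ((hmp.symm e).integrable_comp_emb e.symm.measurableEmbedding).mpr hF₂int
  have hs1 : ∫ g, F₁ g ∂(gaussianPi m) = ∫ z, F₁ (e.symm z) ∂(ν.prod π₂) :=
    ((hmp.symm e).integral_comp' F₁).symm
  have hs2 : ∫ g, F₂ g ∂(gaussianPi m) = ∫ z, F₂ (e.symm z) ∂(ν.prod π₂) :=
    ((hmp.symm e).integral_comp' F₂).symm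
  rw [hs1, hs2]
  have hp1 : ∫ z, F₁ (e.symm z) ∂(ν.prod π₂) = ∫ y, ∫ x, (F₁ ∘ ⇑e.symm) (x, y) ∂ν ∂π₂ :=
    integral_prod_symm _ hG₁int
  have hp2 : ∫ z, F₂ (e.symm z) ∂(ν.prod π₂) = ∫ y, ∫ x, (F₂ ∘ ⇑e.symm) (x, y) ∂ν ∂π₂ :=
    integral_prod_symm _ hG₂int
  rw [hp1, hp2]
  refine integral_mono hG₁int.integral_prod_right hG₂int.integral_prod_right fun y => ?_
  -- now the one-dimensional comparison at fixed y
  set q : Fin m → ℝ := fun i => if h : i = k then 0 else y ⟨i, h⟩ with hq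
  set a : T → ℝ := fun t => ∑ i ∈ Finset.univ.erase k, q i * c₁ i (t.1 i) with ha
  set b : T → ℝ := fun t => c₁ k (t.1 k) with hbdef
  set c : T → ℝ := fun t => c₂ k (t.1 k) with hcdef
  have hsplit : ∀ (d : Fin m → ℝ → ℝ) (x : ℝ) (t : T),
      ∑ i, (e.symm (x, y)) i * d i (t.1 i)
        = (∑ i ∈ Finset.univ.erase k, q i * d i (t.1 i)) + x * d k (t.1 k) := by
    intro d x t
    rw [← Finset.add_sum_erase Finset.univ _ (Finset.mem_univ k)]
    have hk1 : e.symm (x, y) k = x := by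
      rw [he, splitAt_symm_apply, dif_pos rfl]
    rw [hk1, add_comm]
    congr 1
    refine Finset.sum_congr rfl fun i hi => ?_
    have hik : i ≠ k := (Finset.mem_erase.mp hi).1
    have : e.symm (x, y) i = q i := by
      rw [he, splitAt_symm_apply, dif_neg hik]
      simp only [hq]
      rw [dif_neg hik]
    rw [this]
  have hF₁y : ∀ x : ℝ, (F₁ ∘ ⇑e.symm) (x, y) = ⨆ t : T, (a t + x * b t) := by
    intro x
    show F₁ (e.symm (x, y)) = _
    rw [hF₁]
    exact iSup_congr fun t => by rw [hsplit c₁ x t]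
  have hF₂y : ∀ x : ℝ, (F₂ ∘ ⇑e.symm) (x, y) = ⨆ t : T, (a t + x * c t) := by
    intro x
    show F₂ (e.symm (x, y)) = _
    rw [hF₂]
    refine iSup_congr fun t => ?_
    rw [hsplit c₂ x t]
    congr 1
    refine Finset.sum_congr rfl fun i hi => ?_
    rw [← hne i (Finset.mem_erase.mp hi).1]
  have haA : ∀ t : T, |a t| ≤ ∑ i ∈ Finset.univ.erase k, |q i| * C i := by
    intro t
    calc |a t| ≤ ∑ i ∈ Finset.univ.erase k, |q i * c₁ i (t.1 i)| :=
          Finset.abs_sum_le_sum_abs _ _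
    _ ≤ ∑ i ∈ Finset.univ.erase k, |q i| * C i := by
        refine Finset.sum_le_sum fun i _ => ?_
        rw [abs_mul]
        exact mul_le_mul_of_nonneg_left (hb1 i t.1 t.2) (abs_nonneg _)
  have hbK : ∀ t : T, |b t| ≤ C k := fun t => hb1 k t.1 t.2
  have hcK : ∀ t : T, |c t| ≤ C k := fun t => hb2 k t.1 t.2
  have hbc : ∀ s t : T, |b s - b t| ≤ |c s - c t| := fun s t => hk s.1 s.2 t.1 t.2
  have hkey := key1 a b c haA hbK hcK hbc
  simp only [hF₁y, hF₂y]
  exact hkey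


/-- Gaussian contraction inequality: for a bounded nonempty `T ⊆ ℝ^m` and
`ℓ`-Lipschitz contractions `Φ i : ℝ → ℝ`,
`E sup_{t∈T} Σ_i γ_i Φ_i(t_i) ≤ ℓ · E sup_{t∈T} Σ_i γ_i t_i`. -/
theorem gaussian_contraction_inequality
    (m : ℕ) (T : Set (Fin m → ℝ)) (hT : T.Nonempty) (hTb : Bornology.IsBounded T)
    (ℓ : ℝ≥0) (Φ : Fin m → ℝ → ℝ) (hΦ : ∀ i, LipschitzWith ℓ (Φ i)) :
    (∫ g : Fin m → ℝ, ⨆ t : T, ∑ i, g i * Φ i (t.1 i) ∂(gaussianPi m))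
    ≤ (ℓ : ℝ) * ∫ g : Fin m → ℝ, ⨆ t : T, ∑ i, g i * t.1 i ∂(gaussianPi m) := by
  classical
  haveI : Nonempty T := hT.to_subtype
  obtain ⟨R, hR⟩ := hTb.exists_norm_le
  set R' : ℝ := max R 0 with hR'def
  have hTR : ∀ t ∈ T, ∀ i, |t i| ≤ R' := by
    intro t ht i
    have h1 : |t i| ≤ ‖t‖ := by rw [← Real.norm_eq_abs]; exact norm_le_pi_norm t i
    exact h1.trans (le_max_of_le_left (hR t ht))
  set C : Fin m → ℝ := fun i => |Φ i 0| + (ℓ : ℝ) * R' with hCdef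
  have hC : ∀ i, 0 ≤ C i := fun i =>
    add_nonneg (abs_nonneg _) (mul_nonneg ℓ.coe_nonneg (le_max_right _ _))
  set coef : ℕ → Fin m → ℝ → ℝ :=
    fun n i u => if (i : ℕ) < n then (ℓ : ℝ) * u else Φ i u with hcoef
  have hcoefb : ∀ n (i : Fin m), ∀ t ∈ T, |coef n i (t i)| ≤ C i := by
    intro n i t ht
    simp only [hcoef]
    have h4 : (ℓ : ℝ) * |t i| ≤ (ℓ : ℝ) * R' :=
      mul_le_mul_of_nonneg_left (hTR t ht i) ℓ.coe_nonneg
    split_ifs with h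
    · rw [abs_mul, abs_of_nonneg ℓ.coe_nonneg]
      have h3 : (0:ℝ) ≤ |Φ i 0| := abs_nonneg _
      simp only [hCdef]
      linarith
    · have h1 := (hΦ i).dist_le_mul (t i) 0
      rw [Real.dist_eq, Real.dist_eq, sub_zero] at h1
      have h2 : |Φ i (t i)| ≤ |Φ i (t i) - Φ i 0| + |Φ i 0| := by
        calc |Φ i (t i)| = |(Φ i (t i) - Φ i 0) + Φ i 0| := by ring_nf
        _ ≤ |Φ i (t i) - Φ i 0| + |Φ i 0| := abs_add_le _ _
      simp only [hCdef]
      linarith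
  have main : ∀ n, ∫ g, ⨆ t : T, ∑ i, g i * coef 0 i (t.1 i) ∂(gaussianPi m)
      ≤ ∫ g, ⨆ t : T, ∑ i, g i * coef n i (t.1 i) ∂(gaussianPi m) := by
    intro n
    induction n with
    | zero => exact le_refl _
    | succ n ih =>
      refine ih.trans ?_
      by_cases hnm : n < m
      · set k : Fin m := ⟨n, hnm⟩ with hkdef
        refine step_lemma m T hT C hC (coef n) (coef (n + 1)) k ?_ (hcoefb n) (hcoefb (n + 1)) ?_
        · intro i hik
          funext u
          simp only [hcoef]
          have hine : (i : ℕ) ≠ n := fun h => hik (Fin.ext h)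
          by_cases h : (i : ℕ) < n
          · rw [if_pos h, if_pos (by omega)]
          · rw [if_neg h, if_neg (by omega)]
        · intro s hs t ht
          have h1 : ∀ u, coef n k u = Φ k u := fun u => by
            simp only [hcoef]
            exact if_neg (lt_irrefl n)
          have h2 : ∀ u, coef (n + 1) k u = (ℓ : ℝ) * u := fun u => by
            simp only [hcoef]
            exact if_pos (Nat.lt_succ_self n)
          rw [h1, h1, h2, h2, ← mul_sub, abs_mul, abs_of_nonneg ℓ.coe_nonneg]
          have h3 := (hΦ k).dist_le_mul (s k) (t k)
          rw [Real.dist_eq, Real.dist_eq] at h3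
          exact h3
      · have heq : ∀ (i : Fin m) (u : ℝ), coef (n + 1) i u = coef n i u := by
          intro i u
          simp only [hcoef]
          have h1 : (i : ℕ) < n := lt_of_lt_of_le i.isLt (le_of_not_gt hnm)
          rw [if_pos h1, if_pos (by omega)]
        have hfun : (fun g : Fin m → ℝ => ⨆ t : T, ∑ i, g i * coef (n + 1) i (t.1 i))
            = fun g : Fin m → ℝ => ⨆ t : T, ∑ i, g i * coef n i (t.1 i) := by
          funext g
          exact iSup_congr fun t => Finset.sum_congr rfl fun i _ => by rw [heq]
        rw [hfun]
  have h0eq : (fun g : Fin m → ℝ => ⨆ t : T, ∑ i, g i * coef 0 i (t.1 i))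
      = fun g : Fin m → ℝ => ⨆ t : T, ∑ i, g i * Φ i (t.1 i) := by
    funext g
    refine iSup_congr fun t => Finset.sum_congr rfl fun i _ => ?_
    simp only [hcoef]
    rw [if_neg (Nat.not_lt_zero _)]
  have hmeq : (fun g : Fin m → ℝ => ⨆ t : T, ∑ i, g i * coef m i (t.1 i))
      = fun g : Fin m → ℝ => (ℓ : ℝ) * ⨆ t : T, ∑ i, g i * t.1 i := by
    funext g
    have h1 : ∀ t : T, ∑ i, g i * coef m i (t.1 i) = (ℓ : ℝ) * ∑ i, g i * t.1 i := by
      intro t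
      rw [Finset.mul_sum]
      refine Finset.sum_congr rfl fun i _ => ?_
      simp only [hcoef]
      rw [if_pos i.isLt]
      ring
    exact (iSup_congr h1).trans (Real.mul_iSup_of_nonneg ℓ.coe_nonneg _).symm
  have hfin := main m
  rw [h0eq, hmeq, integral_const_mul] at hfin
  exact hfin
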